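/- arXiv:2104.06124 — 3 statements merged into one kernel-verified Lean document; each statement's English description precedes it below -/
import Mathlib

section
/- Let γ = μ + iσ with μ ∈ ℝ and σ > 0 and let X ∼ C(γ). Then log|X| is integrable and E[log|X|] = log|γ|. -/
open MeasureTheory ProbabilityTheory Filter

/-!
Substituting `x = μ + σ tan θ` turns `C(γ)` into the uniform law on `(-π/2, π/2)`. Since
`μ cos θ + σ sin θ = |γ| cos (θ - arg γ)`, almost everywhere
`log |μ + σ tan θ| = log |γ| + log |cos (θ - arg γ)| - log |cos θ|`, and the last two terms have
the same integral because `log |cos|` is `π`-periodic.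
-/

/-- The Cauchy distribution `C(μ, σ)` on `ℝ`. -/
noncomputable def cauchyMeasure (μ σ : ℝ) : Measure ℝ :=
  MeasureTheory.volume.withDensity fun x =>
    ENNReal.ofReal (σ / (Real.pi * ((x - μ) ^ 2 + σ ^ 2)))

open Real Set

lemma ae_cos_sub_ne_zero (φ : ℝ) : ∀ᵐ θ : ℝ, cos (θ - φ) ≠ 0 := by
  have hsub : {θ | cos (θ - φ) = 0} ⊆ range fun k : ℤ => (2 * k + 1) * π / 2 + φ := by
    intro θ hθ
    obtain ⟨k, hk⟩ := cos_eq_zero_iff.1 hθ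
    exact ⟨k, by linarith⟩
  simpa [ae_iff] using measure_mono_null hsub ((countable_range _).measure_zero volume)

lemma re_add_im_mul_tan_eq (γ : ℂ) {θ : ℝ} (hθ : cos θ ≠ 0) (hγ : γ ≠ 0) :
    γ.re + γ.im * tan θ = ‖γ‖ * cos (θ - Complex.arg γ) / cos θ := by
  have hnorm : ‖γ‖ ≠ 0 := norm_ne_zero_iff.2 hγ
  rw [cos_sub, Complex.cos_arg hγ, Complex.sin_arg, tan_eq_sin_div_cos]
  field_simp

lemma log_abs_re_add_im_mul_tan_ae_eq {γ : ℂ} (hγ : γ ≠ 0) :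
    (fun θ => log |γ.re + γ.im * tan θ|) =ᵐ[volume]
      fun θ => log ‖γ‖ + log (cos (θ - Complex.arg γ)) - log (cos θ) := by
  filter_upwards [ae_cos_sub_ne_zero 0, ae_cos_sub_ne_zero (Complex.arg γ)] with θ hθ hθγ
  rw [sub_zero] at hθ
  rw [re_add_im_mul_tan_eq γ hθ hγ, log_abs, log_div (by positivity) hθ,
    log_mul (norm_ne_zero_iff.2 hγ) hθγ]

lemma periodic_log_cos : Function.Periodic (fun θ => log (cos θ)) π := fun θ => by
  simp [cos_add_pi, log_neg_eq_log]

lemma integral_log_cos_sub (φ : ℝ) :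
    ∫ θ in -(π / 2)..π / 2, log (cos (θ - φ)) = ∫ θ in -(π / 2)..π / 2, log (cos θ) := by
  rw [intervalIntegral.integral_comp_sub_right (fun θ => log (cos θ))]
  convert periodic_log_cos.intervalIntegral_add_eq (-(π / 2) - φ) (-(π / 2)) using 2 <;> ring

lemma intervalIntegrable_log_cos_sub (φ a b : ℝ) :
    IntervalIntegrable (fun θ => log (cos (θ - φ))) volume a b := by
  simpa using (intervalIntegrable_log_cos (a := a - φ) (b := b - φ)).comp_sub_right φ

lemma intervalIntegrable_log_abs_re_add_im_mul_tan {γ : ℂ} (hγ : γ ≠ 0) (a b : ℝ) :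
    IntervalIntegrable (fun θ => log |γ.re + γ.im * tan θ|) volume a b := by
  refine IntervalIntegrable.congr_ae ?_
    (ae_restrict_of_ae (log_abs_re_add_im_mul_tan_ae_eq hγ).symm)
  exact (intervalIntegrable_const.add (intervalIntegrable_log_cos_sub _ a b)).sub
    intervalIntegrable_log_cos

lemma integral_log_abs_re_add_im_mul_tan {γ : ℂ} (hγ : γ ≠ 0) :
    ∫ θ in -(π / 2)..π / 2, log |γ.re + γ.im * tan θ| = π * log ‖γ‖ := by
  have hcos : IntervalIntegrable (fun θ => log (cos θ)) volume (-(π / 2)) (π / 2) :=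
    intervalIntegrable_log_cos
  have hcos_sub := intervalIntegrable_log_cos_sub (Complex.arg γ) (-(π / 2)) (π / 2)
  rw [intervalIntegral.integral_congr_ae
      ((log_abs_re_add_im_mul_tan_ae_eq hγ).mono fun θ h _ => h),
    intervalIntegral.integral_sub (intervalIntegrable_const.add hcos_sub) hcos,
    intervalIntegral.integral_add intervalIntegrable_const hcos_sub,
    integral_log_cos_sub, intervalIntegral.integral_const, smul_eq_mul]
  ring

section ChangeOfVariables

variable {E : Type*} [NormedAddCommGroup E] [NormedSpace ℝ E] {m s : ℝ}

lemma hasDerivAt_arctan_sub_div (hs : s ≠ 0) (x : ℝ) :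
    HasDerivAt (fun x => arctan ((x - m) / s)) (s / ((x - m) ^ 2 + s ^ 2)) x := by
  refine ((hasDerivAt_arctan _).comp x
    (((hasDerivAt_id' x).sub_const m).div_const s)).congr_deriv ?_
  field_simp
  ring

lemma arctan_sub_div_injective (hs : s ≠ 0) :
    Function.Injective fun x => arctan ((x - m) / s) := fun x y h => by
  simpa [hs] using arctan_injective h

lemma image_univ_arctan_sub_div (hs : s ≠ 0) :
    (fun x => arctan ((x - m) / s)) '' univ = Ioo (-(π / 2)) (π / 2) := by
  rw [image_univ, ← range_arctan]
  refine (Function.Surjective.range_comp (fun y => ⟨m + s * y, ?_⟩) arctan)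
  field_simp
  ring

lemma integral_cauchyMeasure (hs : 0 < s) (g : ℝ → E) :
    ∫ x, g x ∂cauchyMeasure m s = π⁻¹ • ∫ θ in -(π / 2)..π / 2, g (m + s * tan θ) := by
  rw [_root_.cauchyMeasure, integral_withDensity_eq_integral_toReal_smul (by fun_prop)
      (ae_of_all _ fun _ => ENNReal.ofReal_lt_top),
    intervalIntegral.integral_of_le (by linarith [pi_pos]), integral_Ioc_eq_integral_Ioo,
    ← image_univ_arctan_sub_div (m := m) hs.ne',
    integral_image_eq_integral_abs_deriv_smul MeasurableSet.univ
      (fun x _ => (hasDerivAt_arctan_sub_div hs.ne' x).hasDerivWithinAt)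
      (arctan_sub_div_injective hs.ne').injOn, Measure.restrict_univ, ← integral_smul]
  congr 1 with x
  have hx : m + s * ((x - m) / s) = x := by field_simp; ring
  rw [tan_arctan, hx, smul_smul, abs_of_pos (by positivity), ENNReal.toReal_ofReal (by positivity)]
  field_simp

lemma integrable_cauchyMeasure_iff (hs : 0 < s) {g : ℝ → E} :
    Integrable g (cauchyMeasure m s) ↔
      IntervalIntegrable (fun θ => g (m + s * tan θ)) volume (-(π / 2)) (π / 2) := by
  rw [_root_.cauchyMeasure, integrable_withDensity_iff_integrable_smul' (by fun_prop)
      (ae_of_all _ fun _ => ENNReal.ofReal_lt_top),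
    intervalIntegrable_iff_integrableOn_Ioo_of_le (by linarith [pi_pos]),
    ← image_univ_arctan_sub_div (m := m) hs.ne',
    integrableOn_image_iff_integrableOn_abs_deriv_smul MeasurableSet.univ
      (fun x _ => (hasDerivAt_arctan_sub_div hs.ne' x).hasDerivWithinAt)
      (arctan_sub_div_injective hs.ne').injOn, integrableOn_univ,
    ← integrable_fun_smul_iff pi_ne_zero]
  refine integrable_congr (ae_of_all _ fun x => ?_)
  dsimp only
  have hx : m + s * ((x - m) / s) = x := by field_simp; ring
  rw [tan_arctan, hx, smul_smul, abs_of_pos (by positivity), ENNReal.toReal_ofReal (by positivity)]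
  field_simp

end ChangeOfVariables

theorem log_abs_moment_general
    {Ω : Type*} [MeasurableSpace Ω] (P : Measure Ω)
    (γ : ℂ) (hγ : 0 < γ.im)
    (X : Ω → ℝ) (hX : Measurable X)
    (hlaw : Measure.map X P = cauchyMeasure γ.re γ.im) :
    Integrable (fun ω => Real.log |X ω|) P ∧
      ∫ ω, Real.log |X ω| ∂P = Real.log ‖γ‖ := by
  have hγ₀ : γ ≠ 0 := fun h => hγ.ne' (by simp [h])
  have hlog : AEStronglyMeasurable (fun x : ℝ => log |x|) (Measure.map X P) :=
    (measurable_log.comp measurable_abs).aestronglyMeasurable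
  have hint : Integrable (fun x : ℝ => log |x|) (Measure.map X P) := by
    rw [hlaw, integrable_cauchyMeasure_iff hγ]
    exact intervalIntegrable_log_abs_re_add_im_mul_tan hγ₀ _ _
  refine ⟨(integrable_map_measure hlog hX.aemeasurable).1 hint, ?_⟩
  rw [← integral_map hX.aemeasurable hlog, hlaw, integral_cauchyMeasure hγ,
    integral_log_abs_re_add_im_mul_tan hγ₀, smul_eq_mul, inv_mul_cancel_left₀ pi_ne_zero]

/-- If `X ∼ C(γ)` with `γ = μ + iσ`, `σ > 0`, then `log |X|` is integrable and
`E[log |X|] = log |γ|`. -/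
theorem log_abs_moment
    {Ω : Type*} [MeasurableSpace Ω] (P : Measure Ω) [IsProbabilityMeasure P]
    (γ : ℂ) (hγ : 0 < γ.im)
    (X : Ω → ℝ) (hX : Measurable X)
    (hlaw : Measure.map X P = cauchyMeasure γ.re γ.im) :
    Integrable (fun ω => Real.log |X ω|) P ∧
      ∫ ω, Real.log |X ω| ∂P = Real.log ‖γ‖ :=
  log_abs_moment_general P γ hγ X hX hlaw
end

section
/- Let X_1, X_2, … and Y be complex random variables, m ∈ ℂ, and let (b_n) be positive reals with b_n → ∞ such that b_n·(X_n − m) → Y in law as n → ∞. Let f : ℂ → ℂ be measurable and complex differentiable on an open set containing m. Then b_n·(f(X_n) − f(m)) → f'(m)·Y in law as n → ∞. -/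
/-!
Write `T n = b n • (X n - m)`. Since the laws of `T n` converge weakly they form a tight family,
so `T n` is bounded in probability; with `b n → ∞` this pins `X n` near `m`, where
`f x - f m - f' (x - m) = o(‖x - m‖)`. Hence `b n • (f (X n) - f m) - f' (T n) → 0` in probability,
and Slutsky's lemma transfers the limit `f' Y` of `f' (T n)` (continuous mapping theorem) to
`b n • (f (X n) - f m)`.
-/

open MeasureTheory Filter
open scoped Topology BoundedContinuousFunction

theorem HasFDerivAt.eventually_norm_smul_sub_sub_lt {E F : Type*} [NormedAddCommGroup E]
    [NormedSpace ℝ E] [NormedAddCommGroup F] [NormedSpace ℝ F] {f : E → F} {f' : E →L[ℝ] F}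
    {m : E} (hf : HasFDerivAt f f' m) {ε K : ℝ} (hε : 0 < ε) (hK : 0 < K) :
    ∀ᶠ t : ℝ in atTop, ∀ x, ‖t • (x - m)‖ ≤ K → ‖t • (f x - f m) - f' (t • (x - m))‖ < ε := by
  obtain ⟨ρ, hρ, hsmall⟩ := Metric.eventually_nhds_iff.mp
    (hf.isLittleO.def (c := ε / (2 * K)) (by positivity))
  filter_upwards [eventually_gt_atTop (K / ρ)] with t ht x hx
  have ht₀ : 0 < t := (div_pos hK hρ).trans ht
  have hx' : t * ‖x - m‖ ≤ K := by rwa [norm_smul, Real.norm_of_nonneg ht₀.le] at hx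
  have hdist : dist x m < ρ := by
    rw [div_lt_iff₀ hρ] at ht
    rw [dist_eq_norm]
    nlinarith [norm_nonneg (x - m)]
  calc ‖t • (f x - f m) - f' (t • (x - m))‖ = t * ‖f x - f m - f' (x - m)‖ := by
        rw [map_smul, ← smul_sub, norm_smul, Real.norm_of_nonneg ht₀.le]
    _ ≤ t * (ε / (2 * K) * ‖x - m‖) := by gcongr; exact hsmall hdist
    _ = ε / (2 * K) * (t * ‖x - m‖) := by ring
    _ ≤ ε / (2 * K) * K := by gcongr
    _ < ε := by field_simp; linarith

namespace MeasureTheory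

variable {Ω Ω' E : Type*} {mΩ : MeasurableSpace Ω} {mΩ' : MeasurableSpace Ω'}

theorem tendstoInDistribution_iff_forall_integral_tendsto [TopologicalSpace E]
    [MeasurableSpace E] [OpensMeasurableSpace E] {ι : Type*} {l : Filter ι}
    {μ : Measure Ω} [IsProbabilityMeasure μ] {μ' : Measure Ω'} [IsProbabilityMeasure μ']
    {X : ι → Ω → E} {Z : Ω' → E} (hX : ∀ i, AEMeasurable (X i) μ) (hZ : AEMeasurable Z μ') :
    TendstoInDistribution X l Z (fun _ ↦ μ) μ' ↔
      ∀ g : E →ᵇ ℝ, Tendsto (fun i ↦ ∫ ω, g (X i ω) ∂μ) l (𝓝 (∫ ω, g (Z ω) ∂μ')) := by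
  refine ⟨fun h g ↦ ?_, fun h ↦ ⟨hX, hZ, ?_⟩⟩
  · simpa [integral_map (hX _) g.continuous.aestronglyMeasurable,
      integral_map hZ g.continuous.aestronglyMeasurable] using
      ProbabilityMeasure.tendsto_iff_forall_integral_tendsto.mp h.tendsto g
  · refine ProbabilityMeasure.tendsto_iff_forall_integral_tendsto.mpr fun g ↦ ?_
    simpa [integral_map (hX _) g.continuous.aestronglyMeasurable,
      integral_map hZ g.continuous.aestronglyMeasurable] using h g

theorem TendstoInDistribution.isTightMeasureSet_range [NormedAddCommGroup E]
    [MeasurableSpace E] [BorelSpace E] [SecondCountableTopology E] [CompleteSpace E]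
    {μ : ℕ → Measure Ω} [∀ n, IsProbabilityMeasure (μ n)] {μ' : Measure Ω'}
    [IsProbabilityMeasure μ'] {X : ℕ → Ω → E} {Z : Ω' → E}
    (h : TendstoInDistribution X atTop Z μ μ') :
    IsTightMeasureSet (Set.range fun n ↦ (μ n).map (X n)) := by
  refine (isTightMeasureSet_of_isCompact_closure
    h.tendsto.isCompact_insert_range.closure).subset ?_
  rintro _ ⟨n, rfl⟩
  exact ⟨_, Set.mem_insert_of_mem _ (Set.mem_range_self n), rfl⟩

variable {F : Type*} [NormedAddCommGroup E] [NormedSpace ℝ E] [MeasurableSpace E]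
  [NormedAddCommGroup F] [NormedSpace ℝ F] {f : E → F} {f' : E →L[ℝ] F} {m : E} {b : ℕ → ℝ}

theorem tendstoInMeasure_smul_sub_sub_of_hasFDerivAt {μ : Measure Ω} {X : ℕ → Ω → E}
    (hT_meas : ∀ n, AEMeasurable (fun ω ↦ b n • (X n ω - m)) μ)
    (hT : IsTightMeasureSet (Set.range fun n ↦ μ.map (fun ω ↦ b n • (X n ω - m))))
    (hb : Tendsto b atTop atTop) (hf : HasFDerivAt f f' m) :
    TendstoInMeasure μ (fun n ω ↦ b n • (f (X n ω) - f m) - f' (b n • (X n ω - m))) atTop 0 := by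
  refine tendstoInMeasure_iff_norm.mpr fun ε hε ↦ ENNReal.tendsto_nhds_zero.mpr fun η hη ↦ ?_
  obtain ⟨K, hK⟩ :=
    ENNReal.tendsto_atTop_zero.mp (tendsto_measure_norm_gt_of_isTightMeasureSet hT) η hη
  set K' := max K 1
  filter_upwards [hb.eventually (hf.eventually_norm_smul_sub_sub_lt hε
    (zero_lt_one.trans_le (le_max_right K 1)))] with n hn
  calc μ {ω | ε ≤ ‖b n • (f (X n ω) - f m) - f' (b n • (X n ω - m)) - (0 : Ω → F) ω‖}
      ≤ μ ((fun ω ↦ b n • (X n ω - m)) ⁻¹' {x | K' < ‖x‖}) := by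
        refine measure_mono fun ω hω ↦ ?_
        by_contra hle
        simp only [Set.mem_ofPred_eq, Pi.zero_apply, sub_zero] at hω
        exact (not_lt.mpr hω) (hn (X n ω) (not_lt.mp hle))
    _ ≤ μ.map (fun ω ↦ b n • (X n ω - m)) {x | K' < ‖x‖} := Measure.le_map_apply (hT_meas n) _
    _ ≤ ⨆ ν ∈ Set.range fun n ↦ μ.map (fun ω ↦ b n • (X n ω - m)),
          (ν : Measure E) {x | K' < ‖x‖} :=
        le_iSup₂ (f := fun (ν : Measure E) _ ↦ ν {x | K' < ‖x‖}) _ (Set.mem_range_self n)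
    _ ≤ η := hK K' (le_max_left K 1)

theorem TendstoInDistribution.smul_sub_of_hasFDerivAt [BorelSpace E] [SecondCountableTopology E]
    [CompleteSpace E] [MeasurableSpace F] [BorelSpace F] [SecondCountableTopology F]
    {μ : Measure Ω} [IsProbabilityMeasure μ] {μ' : Measure Ω'} [IsProbabilityMeasure μ']
    {X : ℕ → Ω → E} {Y : Ω' → E}
    (hT : TendstoInDistribution (fun n ω ↦ b n • (X n ω - m)) atTop Y (fun _ ↦ μ) μ')
    (hb : Tendsto b atTop atTop) (hf : HasFDerivAt f f' m)
    (hfX : ∀ n, AEMeasurable (fun ω ↦ f (X n ω)) μ) :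
    TendstoInDistribution (fun n ω ↦ b n • (f (X n ω) - f m)) atTop (fun ω ↦ f' (Y ω))
      (fun _ ↦ μ) μ' :=
  tendstoInDistribution_of_tendstoInMeasure_sub _ _ (hT.continuous_comp f'.continuous)
    (tendstoInMeasure_smul_sub_sub_of_hasFDerivAt hT.forall_aemeasurable
      hT.isTightMeasureSet_range hb hf)
    fun n ↦ ((hfX n).sub_const _).const_smul _

end MeasureTheory

theorem complex_delta_method_general
    {Ω : Type*} [MeasurableSpace Ω] (P : Measure Ω) [IsProbabilityMeasure P]
    {Ω' : Type*} [MeasurableSpace Ω'] (P' : Measure Ω') [IsProbabilityMeasure P']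
    (X : ℕ → Ω → ℂ) (hX : ∀ n, Measurable (X n))
    (Y : Ω' → ℂ) (hY : Measurable Y)
    (m : ℂ) (b : ℕ → ℝ) (hb : Tendsto b atTop atTop)
    (hconv : ∀ g : BoundedContinuousFunction ℂ ℝ,
      Tendsto (fun n => ∫ ω, g (((b n : ℝ) : ℂ) * (X n ω - m)) ∂P)
        atTop (nhds (∫ ω', g (Y ω') ∂P')))
    (f : ℂ → ℂ) (hf_meas : Measurable f)
    (U : Set ℂ) (hU : IsOpen U) (hmU : m ∈ U) (hf : DifferentiableOn ℂ f U) :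
    ∀ g : BoundedContinuousFunction ℂ ℝ,
      Tendsto (fun n => ∫ ω, g (((b n : ℝ) : ℂ) * (f (X n ω) - f m)) ∂P)
        atTop (nhds (∫ ω', g (deriv f m * Y ω') ∂P')) := by
  have hderiv : HasDerivAt f (deriv f m) m :=
    (hf.differentiableAt (hU.mem_nhds hmU)).hasDerivAt
  have hT : TendstoInDistribution (fun n ω ↦ b n • (X n ω - m)) atTop Y (fun _ ↦ P) P' := by
    rw [tendstoInDistribution_iff_forall_integral_tendsto (fun n ↦ by fun_prop) (by fun_prop)]
    simpa only [Complex.real_smul] using hconv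
  have hS := hT.smul_sub_of_hasFDerivAt hb (hderiv.hasFDerivAt.restrictScalars ℝ)
    fun n ↦ by fun_prop
  rw [tendstoInDistribution_iff_forall_integral_tendsto (fun n ↦ by fun_prop) (by fun_prop)] at hS
  simpa only [Complex.real_smul, ContinuousLinearMap.coe_restrictScalars',
    ContinuousLinearMap.toSpanSingleton_apply, smul_eq_mul, mul_comm] using hS

/-- Complex delta method: if `b_n (X_n - m) → Y` in law with `b_n → ∞`, and `f` is
measurable and complex differentiable on an open set containing `m`, then
`b_n (f(X_n) - f(m)) → f'(m) Y` in law. -/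
theorem complex_delta_method
    {Ω : Type*} [MeasurableSpace Ω] (P : Measure Ω) [IsProbabilityMeasure P]
    {Ω' : Type*} [MeasurableSpace Ω'] (P' : Measure Ω') [IsProbabilityMeasure P']
    (X : ℕ → Ω → ℂ) (hX : ∀ n, Measurable (X n))
    (Y : Ω' → ℂ) (hY : Measurable Y)
    (m : ℂ) (b : ℕ → ℝ) (hb_pos : ∀ n, 0 < b n) (hb : Tendsto b atTop atTop)
    (hconv : ∀ g : BoundedContinuousFunction ℂ ℝ,
      Tendsto (fun n => ∫ ω, g (((b n : ℝ) : ℂ) * (X n ω - m)) ∂P)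
        atTop (nhds (∫ ω', g (Y ω') ∂P')))
    (f : ℂ → ℂ) (hf_meas : Measurable f)
    (U : Set ℂ) (hU : IsOpen U) (hmU : m ∈ U) (hf : DifferentiableOn ℂ f U) :
    ∀ g : BoundedContinuousFunction ℂ ℝ,
      Tendsto (fun n => ∫ ω, g (((b n : ℝ) : ℂ) * (f (X n ω) - f m)) ∂P)
        atTop (nhds (∫ ω', g (deriv f m * Y ω') ∂P')) :=
  complex_delta_method_general P P' X hX Y hY m b hb hconv f hf_meas U hU hmU hf
end

section
/- Let γ = μ + iσ with μ ∈ ℝ and σ > 0, let X_1, X_2, … ∼ C(γ) be independent, and let I ⊂ ℝ be a closed bounded interval. Then the family of real random variables (sup_{θ ∈ I} |θ + ∏_{j=1}^N (X_j − θ)^{1/N} − γ|)_{N ≥ 2} is uniformly integrable, where each (X_j − θ)^{1/N} is taken in the principal branch. -/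
open MeasureTheory ProbabilityTheory Filter

open scoped ENNReal Topology

/-!
For `|θ| ≤ C := max |a| |b|` every factor satisfies `‖(X_j - θ) ^ (1/N)‖ ≤ (|X_j| + C) ^ (1/N)`, so
`Y_N ≤ C + ‖γ‖ + G_N` with `G_N = ∏_j (|X_j| + C) ^ (1/N)`, uniformly in `θ`. By independence
`E[G_N ^ (3/2)] = E[(|X| + C) ^ (3/(2N))] ^ N`, and Lyapunov's inequality bounds this by
`E[(|X| + C) ^ (3/4)] ^ 2` as soon as `N ≥ 2`; the latter is finite because a Cauchy variable has
finite moments of every order `< 1`. So `(Y_N)` is bounded in `L^{3/2}`, and uniform integrability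
follows from `E[Y; Y > K] ≤ K ^ (-1/2) E[Y ^ (3/2)]`.
-/

section UniformIntegrability

variable {Ω : Type*} [MeasurableSpace Ω] {μ : Measure Ω}

theorem integrable_of_lintegral_ofReal_rpow_ne_top [IsFiniteMeasure μ] {f : Ω → ℝ}
    (hf_nonneg : 0 ≤ f) (hf : Measurable f) {q : ℝ} (hq : 1 ≤ q)
    (hfq : ∫⁻ ω, ENNReal.ofReal (f ω) ^ q ∂μ ≠ ∞) :
    Integrable f μ := by
  have hq0 : (ENNReal.ofReal q).toReal = q := ENNReal.toReal_ofReal (by linarith)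
  refine MemLp.integrable (q := ENNReal.ofReal q) (by simpa using hq)
    ⟨hf.aestronglyMeasurable, ?_⟩
  rw [eLpNorm_lt_top_iff_lintegral_rpow_enorm_lt_top (by simp; linarith) ENNReal.ofReal_ne_top,
    hq0]
  simpa only [Real.enorm_of_nonneg (hf_nonneg _)] using hfq.lt_top

theorem setLIntegral_lt_le_rpow_mul_lintegral_rpow {f : Ω → ℝ} (hf : Measurable f) {q K : ℝ}
    (hq : 1 ≤ q) (hK : 0 < K) :
    ∫⁻ ω in {ω | K < f ω}, ENNReal.ofReal (f ω) ∂μ ≤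
      ENNReal.ofReal (K ^ (1 - q)) * ∫⁻ ω, ENNReal.ofReal (f ω) ^ q ∂μ := by
  calc ∫⁻ ω in {ω | K < f ω}, ENNReal.ofReal (f ω) ∂μ
      ≤ ∫⁻ ω in {ω | K < f ω}, ENNReal.ofReal (K ^ (1 - q)) * ENNReal.ofReal (f ω) ^ q ∂μ := by
        refine setLIntegral_mono (by fun_prop) fun ω (hω : K < f ω) => ?_
        have hf0 : 0 < f ω := hK.trans hω
        rw [ENNReal.ofReal_rpow_of_nonneg hf0.le (by linarith : (0 : ℝ) ≤ q),
          ← ENNReal.ofReal_mul (by positivity)]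
        refine ENNReal.ofReal_le_ofReal ?_
        calc f ω = f ω ^ (1 - q) * f ω ^ q := by
              rw [← Real.rpow_add hf0, sub_add_cancel, Real.rpow_one]
          _ ≤ K ^ (1 - q) * f ω ^ q := by
              have := Real.rpow_le_rpow_of_nonpos hK hω.le (by linarith : 1 - q ≤ 0)
              gcongr
    _ ≤ ∫⁻ ω, ENNReal.ofReal (K ^ (1 - q)) * ENNReal.ofReal (f ω) ^ q ∂μ :=
        setLIntegral_le_lintegral _ _
    _ = ENNReal.ofReal (K ^ (1 - q)) * ∫⁻ ω, ENNReal.ofReal (f ω) ^ q ∂μ :=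
        lintegral_const_mul' _ _ ENNReal.ofReal_ne_top

/-- de la Vallée-Poussin criterion with the function `t ↦ t ^ q`. -/
theorem exists_forall_setIntegral_lt_le_of_lintegral_rpow_le {ι : Type*} {f : ι → Ω → ℝ}
    (hf : ∀ i, Measurable (f i)) {q : ℝ} (hq : 1 < q) {B : ℝ≥0∞} (hB : B ≠ ∞)
    (hfB : ∀ i, ∫⁻ ω, ENNReal.ofReal (f i ω) ^ q ∂μ ≤ B) {ε : ℝ} (hε : 0 < ε) :
    ∃ K : ℝ, ∀ i, ∫ ω in {ω | K < f i ω}, f i ω ∂μ ≤ ε := by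
  have h_tail : Tendsto (fun K : ℝ => K ^ (1 - q) * B.toReal) atTop (𝓝 0) := by
    simpa [neg_sub] using (tendsto_rpow_neg_atTop (by linarith : 0 < q - 1)).mul_const B.toReal
  obtain ⟨K, hK_pos, hK⟩ :=
    ((eventually_gt_atTop 0).and (h_tail.eventually (ge_mem_nhds hε))).exists
  refine ⟨K, fun i => ?_⟩
  have h_pos : ∀ᵐ ω ∂μ.restrict {ω | K < f i ω}, 0 ≤ f i ω :=
    (ae_restrict_mem (measurableSet_lt measurable_const (hf i))).mono
      fun ω (hω : K < f i ω) => (hK_pos.trans hω).le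
  rw [integral_eq_lintegral_of_nonneg_ae h_pos (hf i).aestronglyMeasurable]
  calc (∫⁻ ω in {ω | K < f i ω}, ENNReal.ofReal (f i ω) ∂μ).toReal
      ≤ (ENNReal.ofReal (K ^ (1 - q)) * B).toReal := by
        refine ENNReal.toReal_mono (ENNReal.mul_ne_top ENNReal.ofReal_ne_top hB) ?_
        grw [setLIntegral_lt_le_rpow_mul_lintegral_rpow (hf i) hq.le hK_pos, hfB i]
    _ = K ^ (1 - q) * B.toReal := by
        rw [ENNReal.toReal_mul, ENNReal.toReal_ofReal (by positivity)]
    _ ≤ ε := hK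

end UniformIntegrability

theorem lintegral_rpow_div_rpow_le {E : Type*} [MeasurableSpace E] {μ : Measure E}
    [IsProbabilityMeasure μ] {g : E → ℝ≥0∞} (hg : AEMeasurable g μ) {q r s : ℝ} (hq : 0 < q)
    (hr : 0 < r) (hrs : r ≤ s) :
    (∫⁻ y, g y ^ (q / s) ∂μ) ^ s ≤ (∫⁻ y, g y ^ (q / r) ∂μ) ^ r := by
  have hs : 0 < s := hr.trans_le hrs
  have h_eq : ∀ t, 0 < t → (∫⁻ y, g y ^ (q / t) ∂μ) ^ t = eLpNorm' g (q / t) μ ^ q := by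
    intro t ht
    rw [eLpNorm'_eq_lintegral_enorm, ← ENNReal.rpow_mul]
    simp only [enorm_eq_self]
    congr 1
    field_simp
  rw [h_eq s hs, h_eq r hr]
  gcongr
  exact eLpNorm'_le_eLpNorm'_of_exponent_le (by positivity)
    (div_le_div_of_nonneg_left hq.le hr hrs) μ hg.aestronglyMeasurable

theorem ProbabilityTheory.iIndepFun.lintegral_prod_comp_eq_pow {Ω E ι : Type*}
    [MeasurableSpace Ω] [MeasurableSpace E] {P : Measure Ω} {μ : Measure E} {X : ι → Ω → E}
    (hindep : iIndepFun X P) (hX : ∀ i, Measurable (X i)) (hlaw : ∀ i, P.map (X i) = μ)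
    {g : E → ℝ≥0∞} (hg : Measurable g) (s : Finset ι) :
    ∫⁻ ω, ∏ i ∈ s, g (X i ω) ∂P = (∫⁻ y, g y ∂μ) ^ s.card := by
  refine (lintegral_prod_eq_prod_lintegral_of_indepFun s _
    (hindep.comp (fun _ => g) fun _ => hg) fun i => hg.comp (hX i)).trans ?_
  simp only [Function.comp_apply, ← lintegral_map hg (hX _), hlaw, Finset.prod_const]

theorem ProbabilityTheory.iIndepFun.lintegral_prod_rpow_le {Ω E ι : Type*}
    [MeasurableSpace Ω] [MeasurableSpace E] {P : Measure Ω} {μ : Measure E} {X : ι → Ω → E}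
    (hindep : iIndepFun X P) (hX : ∀ i, Measurable (X i)) (hlaw : ∀ i, P.map (X i) = μ)
    {g : E → ℝ≥0∞} (hg : Measurable g) (s : Finset ι) {q r : ℝ} (hq : 0 < q) (hr : 0 < r)
    (hrs : r ≤ s.card) :
    ∫⁻ ω, ∏ i ∈ s, g (X i ω) ^ (q / s.card) ∂P ≤ (∫⁻ y, g y ^ (q / r) ∂μ) ^ r := by
  obtain ⟨i₀, -⟩ : s.Nonempty := by
    rw [← Finset.card_pos]; exact_mod_cast hr.trans_le hrs
  have : IsProbabilityMeasure P := hindep.isProbabilityMeasure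
  have : IsProbabilityMeasure μ := hlaw i₀ ▸ Measure.isProbabilityMeasure_map (hX i₀).aemeasurable
  rw [hindep.lintegral_prod_comp_eq_pow hX hlaw (g := fun y => g y ^ (q / s.card)) (by fun_prop),
    ← ENNReal.rpow_natCast]
  exact lintegral_rpow_div_rpow_le hg.aemeasurable hq hr hrs

theorem IsCompact.continuous_biSup_of_nonneg {α β : Type*} [TopologicalSpace α]
    [TopologicalSpace β] {F : α → β → ℝ} {K : Set β} (hK : IsCompact K) (hF : Continuous ↿F)
    (hF_nonneg : ∀ x y, 0 ≤ F x y) :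
    Continuous fun x => ⨆ y ∈ K, F x y := by
  have h_eq : ∀ x, ⨆ y ∈ K, F x y = sSup (F x '' K) := fun x => by
    refine (csSup_image ?_ ?_).symm
    · rw [← Set.image_eq_range]
      exact hK.bddAbove_image (hF.comp (Continuous.prodMk_right x)).continuousOn
    · rw [Real.sSup_empty]
      exact Real.iSup_nonneg fun y => hF_nonneg x y
  simpa only [h_eq] using hK.continuous_sSup hF

section Cauchy

variable {m σ C p : ℝ}

theorem cauchy_density_mul_rpow_le (hσ : 0 < σ) (hC : 0 ≤ C) (hp : 0 ≤ p) (x : ℝ) :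
    σ / (Real.pi * ((x - m) ^ 2 + σ ^ 2)) * (|x| + C) ^ p ≤
      2 * (σ + |m| + C) ^ p / (Real.pi * σ) * (1 + ‖(x - m) / σ‖) ^ (-(2 - p)) := by
  set u := (x - m) / σ
  set w := 1 + ‖u‖
  have hxm : x - m = σ * u := by simp only [u]; field_simp
  have hw : 1 ≤ w := le_add_of_nonneg_right (norm_nonneg u)
  have h_num : |x| + C ≤ (σ + |m| + C) * w := by
    have : |x| ≤ σ * |u| + |m| := by
      calc |x| = |(x - m) + m| := by ring_nf
        _ ≤ |x - m| + |m| := abs_add_le _ _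
        _ = σ * |u| + |m| := by rw [hxm, abs_mul, abs_of_pos hσ]
    have : 0 ≤ (|m| + C) * |u| := by positivity
    simp only [w, Real.norm_eq_abs]
    nlinarith
  have h_den : σ ^ 2 * w ^ 2 ≤ 2 * ((x - m) ^ 2 + σ ^ 2) := by
    have : (1 + |u|) ^ 2 ≤ 2 * (1 + u ^ 2) := by nlinarith [sq_abs u, sq_nonneg (1 - |u|)]
    simp only [w, Real.norm_eq_abs, hxm]
    nlinarith [sq_nonneg σ]
  have hπ := Real.pi_pos
  have h_density : σ / (Real.pi * ((x - m) ^ 2 + σ ^ 2)) ≤ 2 / (Real.pi * σ * w ^ 2) := by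
    rw [div_le_div_iff₀ (by positivity) (by positivity)]
    nlinarith
  calc σ / (Real.pi * ((x - m) ^ 2 + σ ^ 2)) * (|x| + C) ^ p
      ≤ 2 / (Real.pi * σ * w ^ 2) * ((σ + |m| + C) ^ p * w ^ p) := by
        rw [← Real.mul_rpow (by positivity) (by positivity)]
        gcongr
    _ = 2 * (σ + |m| + C) ^ p / (Real.pi * σ) * (w ^ p / w ^ (2 : ℝ)) := by
        rw [Real.rpow_two]; field_simp
    _ = 2 * (σ + |m| + C) ^ p / (Real.pi * σ) * w ^ (-(2 - p)) := by
        rw [← Real.rpow_sub (by positivity), neg_sub]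

theorem lintegral_rpow_cauchyMeasure_lt_top (hσ : 0 < σ) (hC : 0 ≤ C) (hp0 : 0 ≤ p)
    (hp1 : p < 1) :
    ∫⁻ x, ENNReal.ofReal (|x| + C) ^ p ∂cauchyMeasure m σ < ∞ := by
  have h_bound : Integrable fun x : ℝ =>
      2 * (σ + |m| + C) ^ p / (Real.pi * σ) * (1 + ‖(x - m) / σ‖) ^ (-(2 - p)) :=
    (((integrable_one_add_norm (E := ℝ) (μ := volume) (r := 2 - p) (by simp; linarith)).comp_div
      hσ.ne').comp_sub_right m).const_mul _
  rw [_root_.cauchyMeasure, lintegral_withDensity_eq_lintegral_mul _ (by fun_prop) (by fun_prop)]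
  refine lt_of_le_of_lt (lintegral_mono fun x => ?_) h_bound.lintegral_lt_top
  simp only [Pi.mul_apply]
  rw [ENNReal.ofReal_rpow_of_nonneg (by positivity) hp0, ← ENNReal.ofReal_mul (by positivity)]
  exact ENNReal.ofReal_le_ofReal (cauchy_density_mul_rpow_le hσ hC hp0 x)

end Cauchy

noncomputable def shiftedGeomMean (N : ℕ) (x : ℕ → ℝ) (θ : ℝ) : ℂ :=
  θ + ∏ j ∈ Finset.range N, ((x j : ℂ) - θ) ^ (N : ℂ)⁻¹

noncomputable def supDeviation (N : ℕ) (a b : ℝ) (γ : ℂ) (x : ℕ → ℝ) : ℝ :=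
  ⨆ θ ∈ Set.Icc a b, ‖shiftedGeomMean N x θ - γ‖

section ShiftedGeomMean

variable {N : ℕ} {a b : ℝ} {γ : ℂ}

theorem continuous_shiftedGeomMean (hN : 0 < N) :
    Continuous fun p : (ℕ → ℝ) × ℝ => shiftedGeomMean N p.1 p.2 := by
  have h_re : 0 < ((N : ℂ)⁻¹).re := by
    rw [← Complex.ofReal_natCast, ← Complex.ofReal_inv, Complex.ofReal_re]
    positivity
  have h_root : Continuous fun t : ℝ => (t : ℂ) ^ (N : ℂ)⁻¹ :=
    Complex.continuous_ofReal_cpow_const h_re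
  unfold shiftedGeomMean
  refine (Complex.continuous_ofReal.comp continuous_snd).add
    (continuous_finsetProd _ fun j _ => ?_)
  simpa only [Function.comp_def, Complex.ofReal_sub] using
    h_root.comp (by fun_prop : Continuous fun p : (ℕ → ℝ) × ℝ => p.1 j - p.2)

theorem norm_shiftedGeomMean_sub_le (x : ℕ → ℝ) {θ C : ℝ} (hθ : |θ| ≤ C) :
    ‖shiftedGeomMean N x θ - γ‖ ≤ C + ‖γ‖ + ∏ j ∈ Finset.range N, (|x j| + C) ^ (N : ℝ)⁻¹ := by
  have h_root : ∀ j, ‖((x j : ℂ) - θ) ^ (N : ℂ)⁻¹‖ ≤ (|x j| + C) ^ (N : ℝ)⁻¹ := fun j => by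
    rw [Complex.norm_cpow_inv_nat, ← Complex.ofReal_sub, Complex.norm_real, Real.norm_eq_abs]
    gcongr
    exact (abs_sub _ _).trans (by linarith)
  have h_prod : ‖∏ j ∈ Finset.range N, ((x j : ℂ) - θ) ^ (N : ℂ)⁻¹‖ ≤
      ∏ j ∈ Finset.range N, (|x j| + C) ^ (N : ℝ)⁻¹ := by
    rw [norm_prod]
    exact Finset.prod_le_prod (fun _ _ => norm_nonneg _) fun j _ => h_root j
  have h_θ : ‖(θ : ℂ)‖ ≤ C := by rwa [Complex.norm_real, Real.norm_eq_abs]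
  calc ‖shiftedGeomMean N x θ - γ‖
      ≤ ‖(θ : ℂ)‖ + ‖∏ j ∈ Finset.range N, ((x j : ℂ) - θ) ^ (N : ℂ)⁻¹‖ + ‖γ‖ :=
        (norm_sub_le _ _).trans (by gcongr; exact norm_add_le _ _)
    _ ≤ C + ‖γ‖ + ∏ j ∈ Finset.range N, (|x j| + C) ^ (N : ℝ)⁻¹ := by linarith

theorem supDeviation_nonneg (x : ℕ → ℝ) : 0 ≤ supDeviation N a b γ x :=
  Real.iSup_nonneg fun _ => Real.iSup_nonneg fun _ => norm_nonneg _

theorem supDeviation_le (x : ℕ → ℝ) :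
    supDeviation N a b γ x ≤
      max |a| |b| + ‖γ‖ + ∏ j ∈ Finset.range N, (|x j| + max |a| |b|) ^ (N : ℝ)⁻¹ := by
  have h_nonneg :
      0 ≤ max |a| |b| + ‖γ‖ + ∏ j ∈ Finset.range N, (|x j| + max |a| |b|) ^ (N : ℝ)⁻¹ := by
    positivity
  refine Real.iSup_le (fun θ => Real.iSup_le (fun hθ => ?_) h_nonneg) h_nonneg
  exact norm_shiftedGeomMean_sub_le x (abs_le_max_abs_abs hθ.1 hθ.2)

theorem continuous_supDeviation (hN : 0 < N) : Continuous (supDeviation N a b γ) :=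
  isCompact_Icc.continuous_biSup_of_nonneg
    (F := fun x θ => ‖shiftedGeomMean N x θ - γ‖)
    ((continuous_shiftedGeomMean hN).sub continuous_const).norm fun _ _ => norm_nonneg _

end ShiftedGeomMean

theorem lintegral_supDeviation_rpow_le {Ω : Type*} [MeasurableSpace Ω] {P : Measure Ω}
    {μ : Measure ℝ} {X : ℕ → Ω → ℝ} (hX : ∀ j, Measurable (X j)) (hindep : iIndepFun X P)
    (hlaw : ∀ j, P.map (X j) = μ) (a b : ℝ) (γ : ℂ) {N : ℕ} (hN : 2 ≤ N) {q : ℝ} (hq : 1 ≤ q) :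
    ∫⁻ ω, ENNReal.ofReal (supDeviation N a b γ fun j => X j ω) ^ q ∂P ≤
      2 ^ (q - 1) * (ENNReal.ofReal (max |a| |b| + ‖γ‖) ^ q +
        (∫⁻ y, ENNReal.ofReal (|y| + max |a| |b|) ^ (q / 2) ∂μ) ^ (2 : ℝ)) := by
  have : IsProbabilityMeasure P := hindep.isProbabilityMeasure
  set C := max |a| |b|
  set D := ENNReal.ofReal (C + ‖γ‖)
  set φ : ℝ → ℝ≥0∞ := fun y => ENNReal.ofReal (|y| + C)
  set G : Ω → ℝ≥0∞ := fun ω => ∏ j ∈ Finset.range N, φ (X j ω) ^ (N : ℝ)⁻¹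
  have hφ : Measurable φ := by fun_prop
  have h_pointwise : ∀ ω, ENNReal.ofReal (supDeviation N a b γ fun j => X j ω) ≤ D + G ω := by
    intro ω
    refine (ENNReal.ofReal_le_ofReal (supDeviation_le _)).trans_eq ?_
    rw [ENNReal.ofReal_add (by positivity) (by positivity),
      ENNReal.ofReal_prod_of_nonneg fun _ _ => by positivity]
    congr 1
    exact Finset.prod_congr rfl fun j _ =>
      (ENNReal.ofReal_rpow_of_nonneg (by positivity) (by positivity)).symm
  have h_G : ∀ ω, G ω ^ q = ∏ j ∈ Finset.range N, φ (X j ω) ^ (q / (Finset.range N).card) := by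
    intro ω
    rw [← ENNReal.prod_rpow_of_nonneg (by linarith)]
    simp only [← ENNReal.rpow_mul, Finset.card_range]
    congr! 2
    ring
  calc ∫⁻ ω, ENNReal.ofReal (supDeviation N a b γ fun j => X j ω) ^ q ∂P
      ≤ ∫⁻ ω, 2 ^ (q - 1) * (D ^ q + G ω ^ q) ∂P :=
        lintegral_mono fun ω => (ENNReal.rpow_le_rpow (h_pointwise ω) (by linarith)).trans
          (ENNReal.rpow_add_le_mul_rpow_add_rpow _ _ hq)
    _ = 2 ^ (q - 1) * (D ^ q + ∫⁻ ω, G ω ^ q ∂P) := by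
        rw [lintegral_const_mul' _ _ (by simp), lintegral_add_left measurable_const,
          lintegral_const, measure_univ, mul_one]
    _ ≤ 2 ^ (q - 1) * (D ^ q + (∫⁻ y, φ y ^ (q / 2) ∂μ) ^ (2 : ℝ)) := by
        simp only [h_G]
        gcongr
        exact hindep.lintegral_prod_rpow_le hX hlaw hφ _ (by linarith) two_pos (by simpa)

/-- For independent Cauchy samples `X_1, X_2, … ∼ C(γ)` and a closed bounded interval
`I = [a, b]`, the family `(sup_{θ ∈ I} |θ + ∏_{j=1}^N (X_j - θ)^{1/N} - γ|)_{N ≥ 2}`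
is uniformly integrable: each member is integrable, and
`sup_{N ≥ 2} E[Y_N · 1_{Y_N > K}] → 0` as `K → ∞`. -/
theorem shifted_geometric_mean_uniformly_integrable
    {Ω : Type*} [MeasurableSpace Ω] (P : Measure Ω) [IsProbabilityMeasure P]
    (γ : ℂ) (hγ : 0 < γ.im)
    (X : ℕ → Ω → ℝ) (hX : ∀ j, Measurable (X j))
    (hindep : iIndepFun X P)
    (hlaw : ∀ j, Measure.map (X j) P = cauchyMeasure γ.re γ.im)
    (a b : ℝ)
    (Y : ℕ → Ω → ℝ)
    (hY : ∀ N ω, Y N ω = ⨆ θ ∈ Set.Icc a b,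
      ‖((θ : ℂ)
        + (∏ j ∈ Finset.range N, (((X j ω : ℂ)) - (θ : ℂ)) ^ ((N : ℂ))⁻¹) - γ)‖) :
    (∀ N, 2 ≤ N → Integrable (Y N) P) ∧
      ∀ ε : ℝ, 0 < ε → ∃ K : ℝ, ∀ N, 2 ≤ N →
        ∫ ω in {ω | K < Y N ω}, Y N ω ∂P ≤ ε := by
  obtain rfl : Y = fun N ω => supDeviation N a b γ fun j => X j ω :=
    funext fun N => funext fun ω => hY N ω
  have h_meas : ∀ N, 2 ≤ N → Measurable fun ω => supDeviation N a b γ fun j => X j ω :=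
    fun N hN => (continuous_supDeviation (by omega)).measurable.comp (measurable_pi_lambda _ hX)
  have h_cauchy : ∫⁻ y, ENNReal.ofReal (|y| + max |a| |b|) ^ ((3 / 2 : ℝ) / 2)
      ∂cauchyMeasure γ.re γ.im ≠ ∞ :=
    (lintegral_rpow_cauchyMeasure_lt_top hγ (by positivity) (by norm_num) (by norm_num)).ne
  obtain ⟨B, hB, h_moment⟩ : ∃ B ≠ ∞, ∀ N, 2 ≤ N →
      ∫⁻ ω, ENNReal.ofReal (supDeviation N a b γ fun j => X j ω) ^ (3 / 2 : ℝ) ∂P ≤ B :=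
    ⟨_, by finiteness, fun N hN => lintegral_supDeviation_rpow_le hX hindep hlaw a b γ hN
      (by norm_num)⟩
  refine ⟨fun N hN => integrable_of_lintegral_ofReal_rpow_ne_top
    (fun ω => supDeviation_nonneg _) (h_meas N hN) (by norm_num)
    (ne_top_of_le_ne_top hB (h_moment N hN)), fun ε hε => ?_⟩
  obtain ⟨K, hK⟩ := exists_forall_setIntegral_lt_le_of_lintegral_rpow_le
    (f := fun (N : {N // 2 ≤ N}) ω => supDeviation N.1 a b γ fun j => X j ω)
    (fun N => h_meas N.1 N.2) (by norm_num) hB (fun N => h_moment N.1 N.2) hε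
  exact ⟨K, fun N hN => hK ⟨N, hN⟩⟩
end
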